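/- arXiv:1312.1272 — 4 statements merged into one kernel-verified Lean document; each statement's English description precedes it below -/
import Mathlib

section
/- Let G be an abelian lattice-ordered group with an element u ≥ 0. Define, on the interval [0,u] = {x ∈ G : 0 ≤ x ≤ u}, the operations x ⊕ y := inf(u, x + y) and ¬x := u − x, with constant 0. Then ([0,u], ⊕, ¬, 0) is an MV-algebra. -/
class MVAlgebra (A : Type*) extends Zero A where
  oplus : A → A → A
  mvneg : A → A
  oplus_assoc : ∀ x y z : A, oplus x (oplus y z) = oplus (oplus x y) z
  oplus_comm : ∀ x y : A, oplus x y = oplus y x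
  oplus_zero : ∀ x : A, oplus x 0 = x
  mvneg_mvneg : ∀ x : A, mvneg (mvneg x) = x
  oplus_mvneg_zero : ∀ x : A, oplus x (mvneg 0) = mvneg 0
  lukasiewicz : ∀ x y : A,
    oplus (mvneg (oplus (mvneg x) y)) y = oplus (mvneg (oplus (mvneg y) x)) x

/-! The truncated sum `u ⊓ (x + y)` forgets only what lies above `u`, so for `x ≥ 0` an inner
truncation can be dropped: `u ⊓ (x + u ⊓ a) = u ⊓ (x + a)`; this gives associativity. The
Łukasiewicz axiom holds because both of its sides equal `x ⊔ y`: already in `G` one has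
`u - u ⊓ (u - x + y) + y = (x - y)⁺ + y = x ⊔ y`. -/

section LatticeOrderedGroup

variable {G : Type*} [Lattice G] [AddCommGroup G] [AddLeftMono G]

lemma inf_add_inf_of_nonneg (u : G) {x : G} (hx : 0 ≤ x) (a : G) :
    u ⊓ (x + u ⊓ a) = u ⊓ (x + a) := by
  rw [add_inf, ← inf_assoc, inf_eq_left.2 (le_add_of_nonneg_left hx)]

lemma sub_inf_sub_add_add_eq_sup (u x y : G) : u - u ⊓ (u - x + y) + y = x ⊔ y := by
  rw [sub_inf, sub_self, sub_add_eq_sub_sub, sub_sub_cancel, sup_add, zero_add,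
    sub_add_cancel, sup_comm]

abbrev intervalMVAlgebra (u : G) (hu : 0 ≤ u) : MVAlgebra {x : G // 0 ≤ x ∧ x ≤ u} where
  zero := ⟨0, le_rfl, hu⟩
  oplus x y := ⟨u ⊓ (x.1 + y.1), le_inf hu (add_nonneg x.2.1 y.2.1), inf_le_left⟩
  mvneg x := ⟨u - x.1, sub_nonneg.2 x.2.2, sub_le_self u x.2.1⟩
  oplus_assoc x y z := Subtype.ext <| by
    change u ⊓ (x.1 + u ⊓ (y.1 + z.1)) = u ⊓ (u ⊓ (x.1 + y.1) + z.1)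
    rw [inf_add_inf_of_nonneg u x.2.1, add_comm (u ⊓ _) z.1, inf_add_inf_of_nonneg u z.2.1,
      add_comm z.1, add_assoc]
  oplus_comm x y := Subtype.ext <| congrArg (u ⊓ ·) (add_comm x.1 y.1)
  oplus_zero x := Subtype.ext <| (congrArg (u ⊓ ·) (add_zero x.1)).trans (inf_eq_right.2 x.2.2)
  mvneg_mvneg x := Subtype.ext <| sub_sub_cancel u x.1
  oplus_mvneg_zero x := Subtype.ext <| by
    change u ⊓ (x.1 + (u - 0)) = u - 0
    rw [sub_zero, inf_eq_left.2 (le_add_of_nonneg_left x.2.1)]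
  lukasiewicz x y := Subtype.ext <| by
    change u ⊓ (u - u ⊓ (u - x.1 + y.1) + y.1) = u ⊓ (u - u ⊓ (u - y.1 + x.1) + x.1)
    rw [sub_inf_sub_add_add_eq_sup, sub_inf_sub_add_add_eq_sup, sup_comm]

end LatticeOrderedGroup

/-- Let `G` be an abelian ℓ-group and `u ≥ 0`. Then the interval
`[0,u] = {x : 0 ≤ x ∧ x ≤ u}` with `x ⊕ y = inf(u, x+y)`, `¬x = u - x` and
constant `0` is an MV-algebra. -/
theorem unit_interval_is_MV_algebra (G : Type*) [Lattice G] [AddCommGroup G]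
    [CovariantClass G G (· + ·) (· ≤ ·)] (u : G) (hu : 0 ≤ u) :
    ∃ inst : MVAlgebra {x : G // 0 ≤ x ∧ x ≤ u},
      (∀ x y : {x : G // 0 ≤ x ∧ x ≤ u}, (inst.oplus x y).1 = u ⊓ (x.1 + y.1)) ∧
      (∀ x : {x : G // 0 ≤ x ∧ x ≤ u}, (inst.mvneg x).1 = u - x.1) ∧
      (inst.toZero.zero).1 = (0 : G) :=
  ⟨intervalMVAlgebra u hu, fun _ _ => rfl, fun _ => rfl, rfl⟩
end

section
/- Let A be an MV-algebra and let Mₐ be the set of good sequences of A, i.e., sequences a : ℕ → A with aᵢ ⊕ aᵢ₊₁ = aᵢ for all i and aᵣ = 0 for all sufficiently large r. With the sum (a + b)ᵢ := aᵢ ⊕ (aᵢ₋₁ ⊙ b₁) ⊕ … ⊕ (a₁ ⊙ bᵢ₋₁) ⊕ bᵢ and zero the constant sequence 0, Mₐ is a commutative monoid. -/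
open MVAlgebra

/-- The derived operation `x ⊙ y := ¬(¬x ⊕ ¬y)`. -/
def MVAlgebra.odot {A : Type*} [MVAlgebra A] (x y : A) : A :=
  mvneg (oplus (mvneg x) (mvneg y))

/-- A good sequence: `aᵢ ⊕ aᵢ₊₁ = aᵢ` for all `i`, and eventually zero. -/
def Good {A : Type*} [MVAlgebra A] (a : ℕ → A) : Prop :=
  (∀ i, oplus (a i) (a (i + 1)) = a i) ∧ ∃ N, ∀ m, N ≤ m → a m = 0

/-- The sum of (good) sequences:
`(a + b)ₙ = aₙ ⊕ (aₙ₋₁ ⊙ b₀) ⊕ … ⊕ (a₀ ⊙ bₙ₋₁) ⊕ bₙ`. -/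
def addGood {A : Type*} [MVAlgebra A] (a b : ℕ → A) : ℕ → A := fun n =>
  ((List.range n).map (fun j => odot (a (n - 1 - j)) (b j))).foldr oplus
    (oplus (a n) (b n))

/-!
Over an MV-chain every good sequence has the form `(1, …, 1, x, 0, 0, …)`. If `a` has `p` ones
before `x` and `b` has `q` ones before `y`, then `a + b` has `p + q` ones followed by `x ⊕ y`,
then `x ⊙ y`. Over a chain either `x ⊙ y = 0` or `x ⊕ y = 1`, so the sum again has this form.
Closure is then immediate, and associativity reduces to four identities such as
`(x ⊕ y) ⊙ z = x ⊕ (y ⊙ z)` for `x ⊙ y = 0`, `y ⊕ z = 1`. These identities hold in every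
MV-algebra. Both claims are equations preserved by homomorphisms, so Chang's subdirect
representation (the quotients by prime ideals are chains and separate points) transfers them
to an arbitrary MV-algebra.
-/

universe u

namespace MVAlgebra

variable {A : Type u} [MVAlgebra A]

local prefix:max "∼" => mvneg

instance : Add A := ⟨oplus⟩
instance : Mul A := ⟨odot⟩
instance : One A := ⟨∼0⟩

instance : AddCommMonoid A where
  add_assoc x y z := (oplus_assoc x y z).symm
  add_comm := oplus_comm
  add_zero := oplus_zero
  zero_add x := (oplus_comm 0 x).trans (oplus_zero x)
  nsmul := nsmulRec

lemma oplus_eq_add (x y : A) : oplus x y = x + y := rfl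

lemma mvneg_zero : ∼(0 : A) = 1 := rfl

lemma mvneg_one : ∼(1 : A) = 0 := mvneg_mvneg 0

lemma add_one_eq_one (x : A) : x + 1 = 1 := oplus_mvneg_zero x

lemma one_add_eq_one (x : A) : 1 + x = 1 := by rw [add_comm, add_one_eq_one]

lemma mvneg_add_self (x : A) : ∼x + x = 1 := by
  simpa only [oplus_eq_add, add_one_eq_one, mvneg_one, zero_add] using (lukasiewicz x 1).symm

lemma add_mvneg_self (x : A) : x + ∼x = 1 := by rw [add_comm, mvneg_add_self]

lemma mul_def (x y : A) : x * y = ∼(∼x + ∼y) := rfl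

lemma mvneg_add (x y : A) : ∼(x + y) = ∼x * ∼y := by rw [mul_def, mvneg_mvneg, mvneg_mvneg]

lemma mvneg_mul (x y : A) : ∼(x * y) = ∼x + ∼y := by rw [mul_def, mvneg_mvneg]

instance : CommMonoidWithZero A where
  mul_assoc x y z := by simp only [mul_def, mvneg_mvneg, add_assoc]
  mul_comm x y := by rw [mul_def, mul_def, add_comm]
  one_mul x := by rw [mul_def, mvneg_one, zero_add, mvneg_mvneg]
  mul_one x := by rw [mul_def, mvneg_one, add_zero, mvneg_mvneg]
  zero_mul x := by rw [mul_def, mvneg_zero, one_add_eq_one, mvneg_one]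
  mul_zero x := by rw [mul_def, mvneg_zero, add_one_eq_one, mvneg_one]

lemma mul_mvneg_self (x : A) : x * ∼x = 0 := by
  rw [mul_def, mvneg_mvneg, mvneg_add_self, mvneg_one]

lemma mul_mvneg_add_comm (x y : A) : x * ∼y + y = y * ∼x + x := by
  simpa only [mul_def, mvneg_mvneg, oplus_eq_add] using lukasiewicz x y

lemma add_mul_mvneg_eq {x y : A} (h : ∼x + y = 1) : x + y * ∼x = y := by
  rw [add_comm, mul_mvneg_add_comm, mul_def, mvneg_mvneg, h, mvneg_one, zero_add]

instance : PartialOrder A where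
  le x y := ∼x + y = 1
  le_refl := mvneg_add_self
  le_trans x y z hxy hyz := by
    rw [← add_mul_mvneg_eq hyz, ← add_assoc, hxy, one_add_eq_one]
  le_antisymm x y hxy hyx := by
    have h := lukasiewicz x y
    simp only [oplus_eq_add] at h
    rwa [show ∼x + y = 1 from hxy, show ∼y + x = 1 from hyx, mvneg_one, zero_add, zero_add,
      eq_comm] at h

lemma le_def {x y : A} : x ≤ y ↔ ∼x + y = 1 := Iff.rfl

instance : CanonicallyOrderedAdd A where
  exists_add_of_le h := ⟨_, (add_mul_mvneg_eq h).symm⟩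
  le_self_add x y := by rw [le_def, ← add_assoc, mvneg_add_self, one_add_eq_one]
  le_add_self x y := by rw [le_def, add_comm y, ← add_assoc, mvneg_add_self, one_add_eq_one]

instance : IsOrderedAddMonoid A where
  add_le_add_left x y h z := by
    obtain ⟨c, rfl⟩ := exists_add_of_le h
    rw [add_right_comm]
    exact le_self_add

lemma le_one (x : A) : x ≤ 1 := add_one_eq_one (∼x)

lemma eq_one_of_one_le {x : A} (h : 1 ≤ x) : x = 1 := le_antisymm (le_one x) h

lemma mvneg_le_mvneg {x y : A} (h : x ≤ y) : ∼y ≤ ∼x := by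
  rwa [le_def, mvneg_mvneg, add_comm]

lemma mvneg_le_mvneg_iff {x y : A} : ∼x ≤ ∼y ↔ y ≤ x :=
  ⟨fun h => by simpa only [mvneg_mvneg] using mvneg_le_mvneg h, mvneg_le_mvneg⟩

instance : IsOrderedMonoid A where
  mul_le_mul_left x y h z := by
    simpa only [mul_def] using mvneg_le_mvneg (add_le_add_left (mvneg_le_mvneg h) _)

lemma mul_le_left (x y : A) : x * y ≤ x := mul_le_of_le_one_right' (le_one y)

lemma mul_le_right (x y : A) : x * y ≤ y := mul_le_of_le_one_left' (le_one x)

lemma le_mvneg_add_mul (x y : A) : x ≤ ∼y + x * y := by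
  rw [le_def, mul_def, ← add_assoc, add_mvneg_self]

lemma mvneg_add_mul_le (y z : A) : (∼y + z) * y ≤ z := by
  rw [le_def, mul_def, mvneg_mvneg, add_assoc, mvneg_add_self]

lemma mul_le_iff_le_mvneg_add {x y z : A} : x * y ≤ z ↔ x ≤ ∼y + z :=
  ⟨fun h => (le_mvneg_add_mul x y).trans (add_le_add_right h _),
   fun h => (mul_le_mul_left h y).trans (mvneg_add_mul_le y z)⟩

lemma mul_eq_zero_iff_le_mvneg {x y : A} : x * y = 0 ↔ x ≤ ∼y := by
  rw [← nonpos_iff_eq_zero, mul_le_iff_le_mvneg_add, add_zero]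

lemma add_mul_mvneg_le (x y : A) : (x + y) * ∼y ≤ x := by
  rw [mul_le_iff_le_mvneg_add, mvneg_mvneg, add_comm]

lemma add_eq_one_iff_mvneg_le {x y : A} : x + y = 1 ↔ ∼x ≤ y := by
  rw [le_def, mvneg_mvneg]

lemma le_mul_mvneg_add (x y : A) : x ≤ x * ∼y + y := by
  rw [le_def, mul_def, mvneg_mvneg, ← add_assoc, add_comm (∼x), add_assoc, mvneg_add_self]

lemma mul_mvneg_eq_zero_of_le {x y : A} (h : x ≤ y) : x * ∼y = 0 :=
  mul_eq_zero_iff_le_mvneg.2 (by rwa [mvneg_mvneg])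

lemma mul_mvneg_add_le {x y z : A} (hx : x ≤ z) (hy : y ≤ z) : x * ∼y + y ≤ z :=
  calc x * ∼y + y ≤ z * ∼y + y := add_le_add_left (mul_le_mul_left hx _) y
    _ = y * ∼z + z := mul_mvneg_add_comm z y
    _ = z := by rw [mul_mvneg_eq_zero_of_le hy, zero_add]

instance : Lattice A where
  sup x y := x * ∼y + y
  le_sup_left := le_mul_mvneg_add
  le_sup_right x y := le_add_self
  sup_le _ _ _ := mul_mvneg_add_le
  inf x y := (x + ∼y) * y
  inf_le_left x y := by simpa only [mvneg_mvneg] using add_mul_mvneg_le x (∼y)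
  inf_le_right x y := mul_le_right _ _
  le_inf x y z hy hz := by
    rw [← mvneg_le_mvneg_iff]
    simpa only [mvneg_mul, mvneg_add, mvneg_mvneg] using
      mul_mvneg_add_le (mvneg_le_mvneg hy) (mvneg_le_mvneg hz)

lemma sup_def (x y : A) : x ⊔ y = x * ∼y + y := rfl

lemma inf_def (x y : A) : x ⊓ y = (x + ∼y) * y := rfl

lemma inf_eq_mul_mvneg_add (x y : A) : x ⊓ y = x * (∼x + y) := by
  rw [inf_comm, inf_def, mul_comm, add_comm]

lemma add_mul_mvneg_eq_inf (x y : A) : (x + y) * ∼y = x ⊓ ∼y := by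
  rw [inf_def, mvneg_mvneg]

lemma mvneg_sup (x y : A) : ∼(x ⊔ y) = ∼x ⊓ ∼y := by
  rw [sup_def, inf_def, mvneg_add, mvneg_mul, mvneg_mvneg]

lemma mul_add_le_mul_add (x y z : A) : x * (y + z) ≤ x * y + z := by
  rw [le_def, mvneg_mul, mvneg_add]
  apply eq_one_of_one_le
  calc (1 : A) = y + ∼y := (add_mvneg_self y).symm
    _ ≤ (y ⊔ ∼x) + (∼y ⊔ z) := add_le_add le_sup_left le_sup_left
    _ = ∼x + ∼y * ∼z + (x * y + z) := by
      rw [sup_def, sup_def, mvneg_mvneg, mul_comm y x]; abel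

lemma mvneg_add_mul_of_mvneg_le {x y : A} (h : ∼x ≤ y) : ∼x + y * x = y := by
  have hluk := mul_mvneg_add_comm y (∼x)
  rw [mvneg_mvneg, mul_mvneg_eq_zero_of_le h, zero_add] at hluk
  rw [add_comm, hluk]

lemma inf_add_mul_mvneg (x y : A) : x ⊓ y + y * ∼x = y := by
  have hyx : y * ∼x = ∼(∼y + x) := by rw [mvneg_add, mvneg_mvneg]
  rw [inf_comm, inf_eq_mul_mvneg_add, add_comm, hyx]
  exact mvneg_add_mul_of_mvneg_le (hyx ▸ mul_le_left y (∼x))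

lemma add_inf_add_le (x y z : A) : (x + y) ⊓ (x + z) ≤ x + y ⊓ z := by
  set w := (x + y) ⊓ (x + z)
  have hw : w * ∼x ≤ y ⊓ z := by
    apply le_inf
    · exact (mul_le_mul_left inf_le_left _).trans (add_comm x y ▸ add_mul_mvneg_le y x)
    · exact (mul_le_mul_left inf_le_right _).trans (add_comm x z ▸ add_mul_mvneg_le z x)
  calc w ≤ w * ∼x + x := le_mul_mvneg_add w x
    _ ≤ y ⊓ z + x := add_le_add_left hw x
    _ = x + y ⊓ z := add_comm _ _

lemma inf_add_le_inf_add (x y z : A) : x ⊓ (y + z) ≤ x ⊓ y + z := by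
  calc x ⊓ (y + z) ≤ (z + x) ⊓ (z + y) :=
        le_inf (inf_le_left.trans le_add_self) (inf_le_right.trans_eq (add_comm y z))
    _ ≤ z + x ⊓ y := add_inf_add_le z x y
    _ = x ⊓ y + z := add_comm _ _

lemma inf_add_le_inf_add_inf (x y z : A) : x ⊓ (y + z) ≤ x ⊓ y + x ⊓ z := by
  calc x ⊓ (y + z) ≤ x ⊓ (x ⊓ y + z) := le_inf inf_le_left (inf_add_le_inf_add x y z)
    _ = x ⊓ (z + x ⊓ y) := by rw [add_comm]
    _ ≤ x ⊓ z + x ⊓ y := inf_add_le_inf_add x z (x ⊓ y)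
    _ = x ⊓ y + x ⊓ z := add_comm _ _

lemma inf_nsmul_eq_zero {x y : A} (h : x ⊓ y = 0) (n : ℕ) : x ⊓ n • y = 0 := by
  induction n with
  | zero => simp
  | succ n ih =>
    apply nonpos_iff_eq_zero.1
    calc x ⊓ (n + 1) • y = x ⊓ (n • y + y) := by rw [succ_nsmul]
      _ ≤ x ⊓ n • y + x ⊓ y := inf_add_le_inf_add_inf x _ y
      _ = 0 := by rw [ih, h, add_zero]

lemma nsmul_inf_nsmul_eq_zero {x y : A} (h : x ⊓ y = 0) (m n : ℕ) : m • x ⊓ n • y = 0 := by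
  have hyx : n • y ⊓ x = 0 := by rw [inf_comm]; exact inf_nsmul_eq_zero h n
  rw [inf_comm]
  exact inf_nsmul_eq_zero hyx m

/-- `t = (x ⊙ ¬y) ∧ (y ⊙ ¬x)` is both annihilated by and absorbed into `m = x ∨ y`: `m ⊙ t = 0`
and `m ⊕ t = m`. This forces `t = 0`. -/
lemma mul_mvneg_inf_mul_mvneg (x y : A) : x * ∼y ⊓ y * ∼x = 0 := by
  set d := x * ∼y
  set e := y * ∼x
  set t := d ⊓ e
  set m := x ⊔ y
  have hmd : m = d + y := sup_def x y
  have hme : m = e + x := (sup_comm x y).trans (sup_def y x)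
  have hmt : m * t = 0 := by
    have ht : t ≤ ∼m := by
      rw [mvneg_sup]
      exact le_inf (inf_le_right.trans (mul_le_right y (∼x)))
        (inf_le_left.trans (mul_le_right x (∼y)))
    exact nonpos_iff_eq_zero.1 ((mul_le_mul_right ht m).trans_eq (mul_mvneg_self m))
  have hm_add_t : m + t = m := by
    refine le_antisymm ?_ le_self_add
    calc m + t ≤ (m + d) ⊓ (m + e) :=
          le_inf (add_le_add_right inf_le_left m) (add_le_add_right inf_le_right m)
      _ = (d + e + x) ⊓ (d + e + y) := by
          rw [show m + d = d + e + x by rw [hme]; abel, show m + e = d + e + y by rw [hmd]; abel]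
      _ ≤ d + e + x ⊓ y := add_inf_add_le _ _ _
      _ = m := by rw [hmd, add_assoc, add_comm e, inf_add_mul_mvneg]
  have hte : t * ∼(m * t) = (t + m) * ∼m := by
    rw [mvneg_mul, add_comm (∼m), ← inf_eq_mul_mvneg_add, ← add_mul_mvneg_eq_inf]
  apply nonpos_iff_eq_zero.1
  calc t ≤ t * ∼(m * t) + m * t := le_mul_mvneg_add t (m * t)
    _ = 0 := by rw [hte, add_comm t, hm_add_t, mul_mvneg_self, hmt, add_zero]

structure IsIdeal (I : Set A) : Prop where
  zero_mem : 0 ∈ I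
  add_mem {x y : A} : x ∈ I → y ∈ I → x + y ∈ I
  mem_of_le {x y : A} : x ≤ y → y ∈ I → x ∈ I

def adjoin (I : Set A) (u : A) : Set A := {z | ∃ w ∈ I, ∃ n : ℕ, z ≤ w + n • u}

lemma IsIdeal.adjoin {I : Set A} (hI : IsIdeal I) (u : A) : IsIdeal (adjoin I u) where
  zero_mem := ⟨0, hI.zero_mem, 0, zero_le⟩
  add_mem := by
    rintro z₁ z₂ ⟨w₁, hw₁, n₁, h₁⟩ ⟨w₂, hw₂, n₂, h₂⟩
    refine ⟨w₁ + w₂, hI.add_mem hw₁ hw₂, n₁ + n₂, ?_⟩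
    calc z₁ + z₂ ≤ (w₁ + n₁ • u) + (w₂ + n₂ • u) := add_le_add h₁ h₂
      _ = (w₁ + w₂) + (n₁ + n₂) • u := by rw [add_nsmul]; abel
  mem_of_le := by
    rintro z z' hzz' ⟨w, hw, n, h⟩
    exact ⟨w, hw, n, hzz'.trans h⟩

lemma subset_adjoin (I : Set A) (u : A) : I ⊆ adjoin I u :=
  fun z hz => ⟨z, hz, 0, by rw [zero_smul, add_zero]⟩

lemma mem_adjoin_self {I : Set A} (hI : IsIdeal I) (u : A) : u ∈ adjoin I u :=
  ⟨0, hI.zero_mem, 1, by rw [one_smul, zero_add]⟩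

lemma exists_isIdeal_not_mem_maximal {a : A} (ha : a ≠ 0) :
    ∃ M : Set A, IsIdeal M ∧ a ∉ M ∧
      ∀ J : Set A, IsIdeal J → a ∉ J → M ⊆ J → J ⊆ M := by
  set S : Set (Set A) := {I | IsIdeal I ∧ a ∉ I}
  have hbot : ({0} : Set A) ∈ S := by
    refine ⟨⟨rfl, ?_, ?_⟩, ha⟩
    · rintro x y rfl rfl
      exact add_zero 0
    · rintro x y hxy rfl
      exact nonpos_iff_eq_zero.1 hxy
  obtain ⟨M, -, hmax⟩ := zorn_subset_nonempty S (fun c hcS hchain ⟨I₀, hI₀⟩ => by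
    refine ⟨⋃₀ c, ⟨⟨⟨I₀, hI₀, (hcS hI₀).1.zero_mem⟩, ?_, ?_⟩, ?_⟩,
      fun s hs => Set.subset_sUnion_of_mem hs⟩
    · rintro x y ⟨I, hIc, hxI⟩ ⟨J, hJc, hyJ⟩
      rcases hchain.total hIc hJc with h | h
      · exact ⟨J, hJc, (hcS hJc).1.add_mem (h hxI) hyJ⟩
      · exact ⟨I, hIc, (hcS hIc).1.add_mem hxI (h hyJ)⟩
    · rintro x y hxy ⟨I, hIc, hyI⟩
      exact ⟨I, hIc, (hcS hIc).1.mem_of_le hxy hyI⟩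
    · rintro ⟨I, hIc, haI⟩
      exact (hcS hIc).2 haI) _ hbot
  exact ⟨M, hmax.1.1, hmax.1.2, fun J hJ haJ hMJ => hmax.2 ⟨hJ, haJ⟩ hMJ⟩

/-- A maximal ideal avoiding `a` is prime: were `x ⊙ ¬y` and `y ⊙ ¬x` both outside it,
`a` would lie below `w + n • (x ⊙ ¬y)` and `w + m • (y ⊙ ¬x)` for some `w` in the ideal,
hence below `w`, since these two multiples are disjoint. -/
theorem exists_prime_isIdeal {a : A} (ha : a ≠ 0) :
    ∃ P : Set A, IsIdeal P ∧ a ∉ P ∧ ∀ x y : A, x * ∼y ∈ P ∨ y * ∼x ∈ P := by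
  obtain ⟨M, hM, haM, hmax⟩ := exists_isIdeal_not_mem_maximal ha
  refine ⟨M, hM, haM, fun x y => ?_⟩
  by_contra! hxy
  have hbelow : ∀ u ∉ M, ∃ w ∈ M, ∃ n : ℕ, a ≤ w + n • u := by
    intro u hu
    by_contra haJ
    exact hu (hmax _ (hM.adjoin u) haJ (subset_adjoin M u) (mem_adjoin_self hM u))
  obtain ⟨w₁, hw₁, n, hn⟩ := hbelow _ hxy.1
  obtain ⟨w₂, hw₂, m, hm⟩ := hbelow _ hxy.2
  have haw : a ≤ w₁ + w₂ :=
    calc a ≤ (w₁ + w₂ + n • (x * ∼y)) ⊓ (w₁ + w₂ + m • (y * ∼x)) :=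
          le_inf (hn.trans (add_le_add_left le_self_add _))
            (hm.trans (add_le_add_left le_add_self _))
      _ ≤ w₁ + w₂ + n • (x * ∼y) ⊓ m • (y * ∼x) := add_inf_add_le _ _ _
      _ = w₁ + w₂ := by rw [nsmul_inf_nsmul_eq_zero (mul_mvneg_inf_mul_mvneg x y), add_zero]
  exact haM (hM.mem_of_le haw (hM.add_mem hw₁ hw₂))

def mvDist (x y : A) : A := x * ∼y + y * ∼x

lemma mvDist_self (x : A) : mvDist x x = 0 := by rw [mvDist, mul_mvneg_self, add_zero]

lemma mvDist_comm (x y : A) : mvDist x y = mvDist y x := add_comm _ _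

lemma mvDist_one (x : A) : mvDist x 1 = ∼x := by
  rw [mvDist, mvneg_one, mul_zero, one_mul, zero_add]

lemma mvDist_mvneg (x y : A) : mvDist (∼x) (∼y) = mvDist x y := by
  rw [mvDist, mvDist, mvneg_mvneg, mvneg_mvneg, mul_comm (∼x), mul_comm (∼y), add_comm]

lemma eq_of_mvDist_eq_zero {x y : A} (h : mvDist x y = 0) : x = y := by
  have hxy : x * ∼y = 0 := nonpos_iff_eq_zero.1 (le_self_add.trans_eq h)
  have hyx : y * ∼x = 0 := nonpos_iff_eq_zero.1 (le_add_self.trans_eq h)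
  rw [mul_eq_zero_iff_le_mvneg, mvneg_mvneg] at hxy hyx
  exact le_antisymm hxy hyx

lemma add_mul_mvneg_add_le (x y u v : A) : (x + u) * ∼(y + v) ≤ x * ∼y + u * ∼v :=
  calc (x + u) * ∼(y + v) = ∼v * (∼y * (x + u)) := by rw [mvneg_add]; ac_rfl
    _ ≤ ∼v * (∼y * x + u) := mul_le_mul_right (mul_add_le_mul_add _ _ _) _
    _ = ∼v * (u + x * ∼y) := by rw [mul_comm (∼y), add_comm]
    _ ≤ ∼v * u + x * ∼y := mul_add_le_mul_add _ _ _
    _ = x * ∼y + u * ∼v := by rw [mul_comm (∼v), add_comm]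

lemma mul_mvneg_le_add (x y z : A) : x * ∼z ≤ x * ∼y + y * ∼z :=
  calc x * ∼z ≤ (x * ∼y + y) * ∼(0 + z) := by
        rw [zero_add]; exact mul_le_mul_left (le_mul_mvneg_add x y) _
    _ ≤ x * ∼y * ∼0 + y * ∼z := add_mul_mvneg_add_le _ _ _ _
    _ = x * ∼y + y * ∼z := by rw [mvneg_zero, mul_one]

lemma mvDist_triangle (x y z : A) : mvDist x z ≤ mvDist x y + mvDist y z :=
  calc mvDist x z ≤ (x * ∼y + y * ∼z) + (z * ∼y + y * ∼x) :=
        add_le_add (mul_mvneg_le_add x y z) (mul_mvneg_le_add z y x)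
    _ = mvDist x y + mvDist y z := by rw [mvDist, mvDist]; abel

lemma mvDist_add_add_le (x y u v : A) : mvDist (x + u) (y + v) ≤ mvDist x y + mvDist u v :=
  calc mvDist (x + u) (y + v) ≤ (x * ∼y + u * ∼v) + (y * ∼x + v * ∼u) :=
        add_le_add (add_mul_mvneg_add_le x y u v) (add_mul_mvneg_add_le y x v u)
    _ = mvDist x y + mvDist u v := by rw [mvDist, mvDist]; abel

def IsIdeal.setoid {I : Set A} (hI : IsIdeal I) : Setoid A where
  r x y := mvDist x y ∈ I
  iseqv :=
    ⟨fun x => by rw [mvDist_self]; exact hI.zero_mem, fun h => by rwa [mvDist_comm],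
     fun h₁ h₂ => hI.mem_of_le (mvDist_triangle _ _ _) (hI.add_mem h₁ h₂)⟩

def MVQuotient {I : Set A} (hI : IsIdeal I) : Type u := Quotient hI.setoid

namespace MVQuotient

variable {I : Set A} (hI : IsIdeal I)

instance : MVAlgebra (MVQuotient hI) where
  zero := Quotient.mk _ 0
  oplus := Quotient.map₂ (· + ·) fun _ _ hx _ _ hy =>
    hI.mem_of_le (mvDist_add_add_le _ _ _ _) (hI.add_mem hx hy)
  mvneg := Quotient.map mvneg fun x y h => show mvDist (∼x) (∼y) ∈ I by rwa [mvDist_mvneg]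
  oplus_assoc := by
    rintro ⟨x⟩ ⟨y⟩ ⟨z⟩
    exact congrArg (Quotient.mk _) (add_assoc x y z).symm
  oplus_comm := by
    rintro ⟨x⟩ ⟨y⟩
    exact congrArg (Quotient.mk _) (add_comm x y)
  oplus_zero := by
    rintro ⟨x⟩
    exact congrArg (Quotient.mk _) (add_zero x)
  mvneg_mvneg := by
    rintro ⟨x⟩
    exact congrArg (Quotient.mk _) (mvneg_mvneg x)
  oplus_mvneg_zero := by
    rintro ⟨x⟩
    exact congrArg (Quotient.mk _) (add_one_eq_one x)
  lukasiewicz := by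
    rintro ⟨x⟩ ⟨y⟩
    exact congrArg (Quotient.mk _) (lukasiewicz x y)

def mk : A →+ MVQuotient hI where
  toFun := Quotient.mk _
  map_zero' := rfl
  map_add' _ _ := rfl

variable {hI}

lemma mk_mvneg (x : A) : mk hI (∼x) = ∼(mk hI x) := rfl

lemma mk_eq_mk_iff {x y : A} : mk hI x = mk hI y ↔ mvDist x y ∈ I := Quotient.eq

lemma mk_le_mk_iff {x y : A} : mk hI x ≤ mk hI y ↔ x * ∼y ∈ I := by
  rw [le_def, ← mk_mvneg, ← map_add, show (1 : MVQuotient hI) = mk hI 1 from rfl, mk_eq_mk_iff,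
    mvDist_one, mul_def, mvneg_mvneg]

lemma le_total_of_prime (hprime : ∀ x y : A, x * ∼y ∈ I ∨ y * ∼x ∈ I)
    (u v : MVQuotient hI) : u ≤ v ∨ v ≤ u := by
  induction u using Quotient.ind
  induction v using Quotient.ind
  exact (hprime _ _).imp mk_le_mk_iff.2 mk_le_mk_iff.2

end MVQuotient

/-- Chang's subdirect representation theorem, in equational form. -/
theorem eq_of_forall_hom_to_chain {x y : A}
    (H : ∀ (C : Type u) [MVAlgebra C], (∀ u v : C, u ≤ v ∨ v ≤ u) →
      ∀ f : A →+ C, (∀ z, f (∼z) = ∼(f z)) → f x = f y) : x = y := by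
  by_contra hxy
  obtain ⟨P, hP, hxyP, hprime⟩ := exists_prime_isIdeal (mt eq_of_mvDist_eq_zero hxy)
  exact hxyP (MVQuotient.mk_eq_mk_iff.1
    (H _ (MVQuotient.le_total_of_prime hprime) (MVQuotient.mk hP) MVQuotient.mk_mvneg))

lemma foldr_oplus_eq_sum_add (l : List A) (x : A) : l.foldr oplus x = l.sum + x := by
  induction l with
  | nil => exact (zero_add x).symm
  | cons y l ih => rw [List.foldr_cons, List.sum_cons, ih, oplus_eq_add, add_assoc]

lemma addGood_eq_sum (a b : ℕ → A) (n : ℕ) :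
    addGood a b n = ∑ j ∈ Finset.range n, a (n - 1 - j) * b j + (a n + b n) := by
  rw [addGood, foldr_oplus_eq_sum_add, Finset.sum_range, ← List.sum_ofFn, List.ofFn_eq_map,
    ← List.map_coe_finRange_eq_range, List.map_map]
  rfl

/-- `consOne a = (1, a₀, a₁, …)`: prepending a `1` turns the sum of good sequences into the
Cauchy product `(a + b)ₙ = ⊕_{i + j = n + 1} consOne a i ⊙ consOne b j`. -/
def consOne (a : ℕ → A) : ℕ → A
  | 0 => 1
  | i + 1 => a i

open Finset in
lemma addGood_eq_sum_antidiagonal (a b : ℕ → A) (n : ℕ) :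
    addGood a b n = ∑ ij ∈ antidiagonal (n + 1), consOne a ij.1 * consOne b ij.2 := by
  rw [addGood_eq_sum, Nat.sum_antidiagonal_succ,
    Nat.sum_antidiagonal_eq_sum_range_succ (fun i j => consOne a (i + 1) * consOne b j),
    sum_range_succ]
  have hsum : ∑ i ∈ range n, consOne a (i + 1) * consOne b (n - i) =
      ∑ j ∈ range n, a (n - 1 - j) * b j := by
    refine (sum_range_reflect _ n).symm.trans (sum_congr rfl fun j hj => ?_)
    rw [show n - (n - 1 - j) = j + 1 by grind]
    rfl
  rw [hsum, Nat.sub_self]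
  simp only [consOne, one_mul, mul_one]
  abel

lemma addGood_comm (a b : ℕ → A) : addGood a b = addGood b a := by
  ext n
  rw [addGood_eq_sum_antidiagonal, addGood_eq_sum_antidiagonal,
    ← Finset.Nat.sum_antidiagonal_swap]
  simp only [Prod.fst_swap, Prod.snd_swap, mul_comm]

lemma addGood_zero_right (a : ℕ → A) : addGood a (fun _ => 0) = a := by
  ext n
  simp only [addGood_eq_sum, mul_zero, Finset.sum_const_zero, zero_add, add_zero]

lemma addGood_eventually_zero {a b : ℕ → A} (ha : ∃ N, ∀ m, N ≤ m → a m = 0)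
    (hb : ∃ N, ∀ m, N ≤ m → b m = 0) : ∃ N, ∀ m, N ≤ m → addGood a b m = 0 := by
  obtain ⟨Na, hNa⟩ := ha
  obtain ⟨Nb, hNb⟩ := hb
  refine ⟨Na + Nb, fun m hm => ?_⟩
  have hterms : ∀ j ∈ Finset.range m, a (m - 1 - j) * b j = 0 := by
    intro j hj
    rcases le_or_gt Nb j with h | h
    · rw [hNb j h, mul_zero]
    · rw [hNa (m - 1 - j) (by grind), zero_mul]
  rw [addGood_eq_sum, Finset.sum_eq_zero hterms, hNa m (by omega), hNb m (by omega), add_zero,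
    add_zero]

section Hom

variable {B : Type*} [MVAlgebra B] (f : A →+ B)

lemma map_mul_of_map_mvneg (hf : ∀ x, f (∼x) = ∼(f x)) (x y : A) : f (x * y) = f x * f y := by
  rw [mul_def, hf, map_add, hf, hf, mul_def]

lemma comp_addGood (hf : ∀ x, f (∼x) = ∼(f x)) (a b : ℕ → A) :
    f ∘ addGood a b = addGood (f ∘ a) (f ∘ b) := by
  ext n
  simp only [Function.comp_apply, addGood_eq_sum, map_add, map_sum, map_mul_of_map_mvneg f hf]

lemma Good.comp {a : ℕ → A} (ha : Good a) : Good (f ∘ a) := by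
  obtain ⟨hstep, N, hN⟩ := ha
  refine ⟨fun i => ?_, N, fun m hm => ?_⟩
  · simp only [Function.comp_apply, oplus_eq_add, ← map_add]
    exact congrArg f (hstep i)
  · simp only [Function.comp_apply, hN m hm, map_zero]

end Hom

def onesThen (p : ℕ) (x : A) : ℕ → A := fun i => if i < p then 1 else if i = p then x else 0

lemma good_onesThen (p : ℕ) (x : A) : Good (onesThen p x) := by
  refine ⟨fun i => ?_, p + 1, fun m hm => ?_⟩
  · simp only [onesThen, oplus_eq_add]
    split_ifs <;> first | omega | simp only [one_add_eq_one, add_one_eq_one, add_zero]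
  · simp only [onesThen]
    split_ifs <;> first | omega | rfl

lemma onesThen_of_lt {p i : ℕ} (x : A) (h : i < p) : onesThen p x i = 1 := if_pos h

lemma onesThen_self (p : ℕ) (x : A) : onesThen p x p = x := by simp [onesThen]

lemma onesThen_eq_zero {p i : ℕ} (x : A) (h : p < i) : onesThen p x i = 0 := by
  simp only [onesThen]
  split_ifs <;> first | omega | rfl

lemma consOne_onesThen (p : ℕ) (x : A) : consOne (onesThen p x) = onesThen (p + 1) x := by
  ext (_ | i) <;> simp [consOne, onesThen]

open Finset in
lemma addGood_onesThen (p q : ℕ) (x y : A) :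
    addGood (onesThen p x) (onesThen q y) =
      Function.update (onesThen (p + q) (x + y)) (p + q + 1) (x * y) := by
  ext n
  set F : ℕ × ℕ → A := fun ij => onesThen (p + 1) x ij.1 * onesThen (q + 1) y ij.2
  have hF : ∀ i j, p + 1 < i ∨ q + 1 < j → F (i, j) = 0 := by
    rintro i j (h | h)
    · simp only [F, onesThen_eq_zero x h, zero_mul]
    · simp only [F, onesThen_eq_zero y h, mul_zero]
  rw [addGood_eq_sum_antidiagonal, consOne_onesThen, consOne_onesThen]
  change ∑ ij ∈ antidiagonal (n + 1), F ij = _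
  rcases lt_trichotomy n (p + q) with hn | rfl | hn
  · rw [Function.update_of_ne (by omega), onesThen_of_lt _ hn]
    have hmem : (min (n + 1) p, n + 1 - min (n + 1) p) ∈ antidiagonal (n + 1) :=
      HasAntidiagonal.mem_antidiagonal.2 (Nat.add_sub_of_le (min_le_left _ _))
    refine eq_one_of_one_le (le_of_eq_of_le ?_ (single_le_sum (fun _ _ => zero_le) hmem))
    dsimp only [F]
    rw [onesThen_of_lt _ (by omega), onesThen_of_lt _ (by omega), mul_one]
  · rw [Function.update_of_ne (by omega), onesThen_self,
      sum_eq_add_of_mem (p, q + 1) (p + 1, q) (by simp; omega) (by simp; omega) (by simp)]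
    · dsimp only [F]
      rw [onesThen_of_lt _ (by omega), onesThen_self, onesThen_self, onesThen_of_lt _ (by omega),
        one_mul, mul_one, add_comm]
    · rintro ⟨i, j⟩ hij hne
      rw [HasAntidiagonal.mem_antidiagonal] at hij
      simp only [ne_eq, Prod.mk.injEq] at hne
      exact hF i j (by omega)
  rcases eq_or_ne n (p + q + 1) with rfl | hn'
  · rw [Function.update_self, sum_eq_single_of_mem (p + 1, q + 1) (by simp; omega)]
    · exact congrArg₂ (· * ·) (onesThen_self _ _) (onesThen_self _ _)
    · rintro ⟨i, j⟩ hij hne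
      rw [HasAntidiagonal.mem_antidiagonal] at hij
      simp only [ne_eq, Prod.mk.injEq] at hne
      exact hF i j (by omega)
  · rw [Function.update_of_ne hn', onesThen_eq_zero _ hn]
    refine sum_eq_zero fun ⟨i, j⟩ hij => hF i j ?_
    rw [HasAntidiagonal.mem_antidiagonal] at hij
    omega

lemma mvneg_injective : Function.Injective (mvneg : A → A) :=
  Function.Involutive.injective mvneg_mvneg

lemma add_mul_eq_add_mul_of_mul_eq_zero {x y z : A} (hxy : x * y = 0) (hyz : y + z = 1) :
    (x + y) * z = x + y * z := by
  have hy : ∼z + y * z = y :=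
    mvneg_add_mul_of_mvneg_le (add_eq_one_iff_mvneg_le.1 (add_comm y z ▸ hyz))
  have hz : ∼y + y * z = z :=
    mul_comm y z ▸ mvneg_add_mul_of_mvneg_le (add_eq_one_iff_mvneg_le.1 hyz)
  have hle : x + y * z ≤ z :=
    (add_le_add_left (mul_eq_zero_iff_le_mvneg.1 hxy) _).trans_eq hz
  calc (x + y) * z = (x + (∼z + y * z)) * z := by rw [hy]
    _ = (x + y * z) ⊓ z := by rw [inf_def]; congr 1; abel
    _ = x + y * z := inf_eq_left.2 hle

lemma mul_add_eq_add_mul_of_add_eq_one {x y z : A} (hxy : x + y = 1) (hyz : y + z = 1) :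
    x * y + z = x + y * z := by
  have hx : ∼y + x * y = x :=
    mvneg_add_mul_of_mvneg_le (add_eq_one_iff_mvneg_le.1 (add_comm x y ▸ hxy))
  have hz : ∼y + z * y = z := mvneg_add_mul_of_mvneg_le (add_eq_one_iff_mvneg_le.1 hyz)
  calc x * y + z = x * y + (∼y + z * y) := by rw [hz]
    _ = ∼y + x * y + y * z := by rw [mul_comm z y]; abel
    _ = x + y * z := by rw [hx]

lemma mul_add_eq_mul_add_of_add_eq_one {x y z : A} (hxy : x + y = 1) (hyz : y * z = 0) :
    x * y + z = x * (y + z) :=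
  calc x * y + z = z + y * x := by rw [mul_comm, add_comm]
    _ = (z + y) * x := (add_mul_eq_add_mul_of_mul_eq_zero (mul_comm z y ▸ hyz)
        (add_comm y x ▸ hxy)).symm
    _ = x * (y + z) := by rw [mul_comm, add_comm]

lemma add_mul_eq_mul_add_of_mul_eq_zero {x y z : A} (hxy : x * y = 0) (hyz : y * z = 0) :
    (x + y) * z = x * (y + z) := by
  apply mvneg_injective
  simpa only [mvneg_mul, mvneg_add] using mul_add_eq_add_mul_of_add_eq_one
    (by rw [← mvneg_mul, hxy, mvneg_zero]) (by rw [← mvneg_mul, hyz, mvneg_zero])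

lemma addGood_onesThen_of_mul_eq_zero (p q : ℕ) {x y : A} (h : x * y = 0) :
    addGood (onesThen p x) (onesThen q y) = onesThen (p + q) (x + y) := by
  rw [addGood_onesThen, h, Function.update_eq_self_iff, onesThen_eq_zero _ (by omega)]

lemma addGood_onesThen_of_add_eq_one (p q : ℕ) {x y : A} (h : x + y = 1) :
    addGood (onesThen p x) (onesThen q y) = onesThen (p + q + 1) (x * y) := by
  rw [addGood_onesThen, h]
  ext n
  simp only [Function.update, onesThen, eq_rec_constant, dite_eq_ite]
  split_ifs <;> first | rfl | omega

section Chain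

variable (htot : ∀ x y : A, x ≤ y ∨ y ≤ x)
include htot

lemma mul_eq_zero_or_add_eq_one (x y : A) : x * y = 0 ∨ x + y = 1 :=
  (htot x (∼y)).imp mul_eq_zero_iff_le_mvneg.2 fun h =>
    (add_comm x y).trans (add_eq_one_iff_mvneg_le.2 h)

lemma eq_zero_or_eq_one_of_add_eq {x y : A} (h : x + y = x) : y = 0 ∨ x = 1 := by
  refine (mul_eq_zero_or_add_eq_one htot x y).imp (fun hxy => ?_) fun hxy => h ▸ hxy
  have hy : y ≤ ∼x := mul_eq_zero_iff_le_mvneg.1 ((mul_comm y x).trans hxy)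
  calc y = y ⊓ ∼x := (inf_eq_left.2 hy).symm
    _ = (x + y) * ∼x := by rw [add_comm, add_mul_mvneg_eq_inf]
    _ = 0 := by rw [h, mul_mvneg_self]

lemma Good.exists_eq_onesThen {a : ℕ → A} (ha : Good a) : ∃ p, a = onesThen p (a p) := by
  classical
  obtain ⟨hstep, N, hN⟩ := ha
  have hex : ∃ k, a (k + 1) = 0 := ⟨N, hN _ (by omega)⟩
  refine ⟨Nat.find hex, funext fun i => ?_⟩
  rcases lt_trichotomy i (Nat.find hex) with hi | rfl | hi
  · rw [onesThen_of_lt _ hi]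
    exact (eq_zero_or_eq_one_of_add_eq htot (hstep i)).resolve_left (Nat.find_min hex hi)
  · rw [onesThen_self]
  · rw [onesThen_eq_zero _ hi]
    induction i, hi using Nat.le_induction with
    | base => exact Nat.find_spec hex
    | succ i _ ih => simpa only [ih, oplus_eq_add, zero_add] using hstep i

lemma good_addGood_onesThen (p q : ℕ) (x y : A) :
    Good (addGood (onesThen p x) (onesThen q y)) := by
  rcases mul_eq_zero_or_add_eq_one htot x y with h | h
  · rw [addGood_onesThen_of_mul_eq_zero p q h]
    exact good_onesThen _ _
  · rw [addGood_onesThen_of_add_eq_one p q h]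
    exact good_onesThen _ _

lemma addGood_onesThen_assoc (p q r : ℕ) (x y z : A) :
    addGood (addGood (onesThen p x) (onesThen q y)) (onesThen r z) =
      addGood (onesThen p x) (addGood (onesThen q y) (onesThen r z)) := by
  rcases mul_eq_zero_or_add_eq_one htot x y with hxy | hxy <;>
    rcases mul_eq_zero_or_add_eq_one htot y z with hyz | hyz
  · rw [addGood_onesThen_of_mul_eq_zero p q hxy, addGood_onesThen_of_mul_eq_zero q r hyz,
      addGood_onesThen, addGood_onesThen, add_mul_eq_mul_add_of_mul_eq_zero hxy hyz]
    simp only [add_assoc]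
  · rw [addGood_onesThen_of_mul_eq_zero p q hxy, addGood_onesThen_of_add_eq_one q r hyz,
      addGood_onesThen_of_add_eq_one _ _ (by rw [add_assoc, hyz, add_one_eq_one]),
      addGood_onesThen_of_mul_eq_zero _ _ (by rw [← mul_assoc, hxy, zero_mul]),
      add_mul_eq_add_mul_of_mul_eq_zero hxy hyz]
    congr 1
    omega
  · rw [addGood_onesThen_of_add_eq_one p q hxy, addGood_onesThen_of_mul_eq_zero q r hyz,
      addGood_onesThen_of_mul_eq_zero _ _ (by rw [mul_assoc, hyz, mul_zero]),
      addGood_onesThen_of_add_eq_one _ _ (by rw [← add_assoc, hxy, one_add_eq_one]),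
      mul_add_eq_mul_add_of_add_eq_one hxy hyz]
    congr 1
    omega
  · rw [addGood_onesThen_of_add_eq_one p q hxy, addGood_onesThen_of_add_eq_one q r hyz,
      addGood_onesThen, addGood_onesThen, mul_add_eq_add_mul_of_add_eq_one hxy hyz, mul_assoc,
      show p + q + 1 + r = p + (q + r + 1) by omega]

end Chain

lemma good_addGood {a b : ℕ → A} (ha : Good a) (hb : Good b) : Good (addGood a b) := by
  refine ⟨fun i => eq_of_forall_hom_to_chain fun C _ htot f hf => ?_,
    addGood_eventually_zero ha.2 hb.2⟩
  obtain ⟨p, hp⟩ := (ha.comp f).exists_eq_onesThen htot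
  obtain ⟨q, hq⟩ := (hb.comp f).exists_eq_onesThen htot
  have hgood : Good (f ∘ addGood a b) := by
    rw [comp_addGood f hf, hp, hq]
    exact good_addGood_onesThen htot _ _ _ _
  simpa only [oplus_eq_add, map_add, Function.comp_apply] using hgood.1 i

lemma addGood_assoc {a b c : ℕ → A} (ha : Good a) (hb : Good b) (hc : Good c) :
    addGood (addGood a b) c = addGood a (addGood b c) := by
  ext n
  refine eq_of_forall_hom_to_chain fun C _ htot f hf => congrFun (?_ : f ∘ _ = f ∘ _) n
  obtain ⟨p, hp⟩ := (ha.comp f).exists_eq_onesThen htot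
  obtain ⟨q, hq⟩ := (hb.comp f).exists_eq_onesThen htot
  obtain ⟨r, hr⟩ := (hc.comp f).exists_eq_onesThen htot
  simp only [comp_addGood f hf]
  rw [hp, hq, hr]
  exact addGood_onesThen_assoc htot _ _ _ _ _ _

end MVAlgebra

/-- The good sequences of an MV-algebra, with the sum above and the constant zero
sequence, form a commutative monoid. -/
theorem good_sequences_comm_monoid (A : Type*) [MVAlgebra A] :
    Good (fun _ : ℕ => (0 : A)) ∧
    (∀ a b : ℕ → A, Good a → Good b → Good (addGood a b)) ∧
    (∀ a b c : ℕ → A, Good a → Good b → Good c →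
      addGood (addGood a b) c = addGood a (addGood b c)) ∧
    (∀ a b : ℕ → A, Good a → Good b → addGood a b = addGood b a) ∧
    (∀ a : ℕ → A, Good a →
      addGood a (fun _ => 0) = a ∧ addGood (fun _ => 0) a = a) :=
  ⟨⟨fun _ => oplus_zero 0, 0, fun _ _ => rfl⟩, fun _ _ => good_addGood,
    fun _ _ _ => addGood_assoc, fun a b _ _ => addGood_comm a b,
    fun a _ => ⟨addGood_zero_right a, (addGood_comm _ a).trans (addGood_zero_right a)⟩⟩
end

section
/- Let A be an MV-algebra and let a, b be good sequences of A. Then the componentwise infimum (inf(a₁,b₁), inf(a₂,b₂), …) and the componentwise supremum (sup(a₁,b₁), sup(a₂,b₂), …) are again good sequences, and they are respectively the infimum and the supremum of a and b in the partial order defined by a ≤ b iff aᵢ ≤ bᵢ for all i. -/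
open MVAlgebra

/-- The natural order of an MV-algebra: `x ≤ y` iff `¬x ⊕ y = ¬0`. -/
def MVLe {A : Type*} [MVAlgebra A] (x y : A) : Prop :=
  oplus (mvneg x) y = mvneg 0

/-- The lattice infimum for the natural order: `inf(x,y) = x ⊙ (¬x ⊕ y)`. -/
def MVInf {A : Type*} [MVAlgebra A] (x y : A) : A := odot x (oplus (mvneg x) y)

/-- The lattice supremum for the natural order: `sup(x,y) = (x ⊙ ¬y) ⊕ y`. -/
def MVSup {A : Type*} [MVAlgebra A] (x y : A) : A := oplus (odot x (mvneg y)) y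

/-!
The infimum step is monotonicity of `⊕`: `(x ∧ y) ⊕ (x' ∧ y')` lies below both `x ⊕ x' = x` and
`y ⊕ y' = y`. For the supremum, `x ∨ y` is both `(x ⊙ ¬y) ⊕ y` and `(y ⊙ ¬x) ⊕ x`, so it absorbs
`y'` and `x'` because `y` and `x` do; since `x' ∨ y' ≤ x' ⊕ y'`, it also absorbs `x' ∨ y'`.
-/

namespace MVAlgebra

variable {A : Type*} [MVAlgebra A]

theorem zero_oplus (x : A) : oplus 0 x = x := by
  rw [oplus_comm, oplus_zero]

theorem one_oplus (x : A) : oplus (mvneg 0) x = mvneg 0 := by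
  rw [oplus_comm, oplus_mvneg_zero]

theorem mvneg_oplus_self (x : A) : oplus (mvneg x) x = mvneg 0 := by
  have h := lukasiewicz x (mvneg 0)
  rw [oplus_mvneg_zero, mvneg_mvneg, zero_oplus] at h
  exact h.symm

theorem mvLe_refl (x : A) : MVLe x x :=
  mvneg_oplus_self x

theorem mvLe_antisymm {x y : A} (hxy : MVLe x y) (hyx : MVLe y x) : x = y := by
  have h := lukasiewicz x y
  rw [hxy, hyx, mvneg_mvneg, zero_oplus, zero_oplus] at h
  exact h.symm

theorem mvSup_comm (x y : A) : MVSup x y = MVSup y x := by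
  unfold MVSup odot
  rw [mvneg_mvneg, mvneg_mvneg]
  exact lukasiewicz x y

theorem mvSup_eq_right {x y : A} (h : MVLe x y) : MVSup x y = y := by
  unfold MVSup odot
  rw [mvneg_mvneg, h, mvneg_mvneg, zero_oplus]

theorem mvSup_self (x : A) : MVSup x x = x :=
  mvSup_eq_right (mvLe_refl x)

theorem mvLe_iff_exists_oplus {x y : A} : MVLe x y ↔ ∃ t, y = oplus x t := by
  constructor
  · intro h
    refine ⟨odot y (mvneg x), ?_⟩
    calc y = MVSup x y := (mvSup_eq_right h).symm
      _ = MVSup y x := mvSup_comm x y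
      _ = oplus x (odot y (mvneg x)) := oplus_comm _ _
  · rintro ⟨t, rfl⟩
    show oplus (mvneg x) (oplus x t) = mvneg 0
    rw [oplus_assoc, mvneg_oplus_self, one_oplus]

theorem mvLe_oplus_right (x t : A) : MVLe x (oplus x t) :=
  mvLe_iff_exists_oplus.2 ⟨t, rfl⟩

theorem mvLe_trans {x y z : A} (hxy : MVLe x y) (hyz : MVLe y z) : MVLe x z := by
  obtain ⟨s, rfl⟩ := mvLe_iff_exists_oplus.1 hxy
  obtain ⟨t, rfl⟩ := mvLe_iff_exists_oplus.1 hyz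
  rw [← oplus_assoc]
  exact mvLe_oplus_right x (oplus s t)

theorem oplus_mvLe_oplus_left {x y : A} (h : MVLe x y) (z : A) :
    MVLe (oplus z x) (oplus z y) := by
  obtain ⟨t, rfl⟩ := mvLe_iff_exists_oplus.1 h
  rw [oplus_assoc]
  exact mvLe_oplus_right (oplus z x) t

theorem oplus_mvLe_oplus_right {x y : A} (h : MVLe x y) (z : A) :
    MVLe (oplus x z) (oplus y z) := by
  rw [oplus_comm x, oplus_comm y]
  exact oplus_mvLe_oplus_left h z

theorem oplus_mvLe_oplus {x y u v : A} (hxy : MVLe x y) (huv : MVLe u v) :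
    MVLe (oplus x u) (oplus y v) :=
  mvLe_trans (oplus_mvLe_oplus_right hxy u) (oplus_mvLe_oplus_left huv y)

theorem mvneg_mvLe_mvneg {x y : A} (h : MVLe x y) : MVLe (mvneg y) (mvneg x) := by
  show oplus (mvneg (mvneg y)) (mvneg x) = mvneg 0
  rw [mvneg_mvneg, oplus_comm]
  exact h

theorem odot_mvLe_left (x y : A) : MVLe (odot x y) x := by
  show oplus (mvneg (odot x y)) x = mvneg 0
  unfold odot
  rw [mvneg_mvneg, oplus_comm (mvneg x), ← oplus_assoc, mvneg_oplus_self, oplus_mvneg_zero]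

theorem odot_mvLe_odot_right {x y : A} (h : MVLe x y) (z : A) :
    MVLe (odot x z) (odot y z) :=
  mvneg_mvLe_mvneg (oplus_mvLe_oplus_right (mvneg_mvLe_mvneg h) (mvneg z))

theorem mvLe_mvSup_right (x y : A) : MVLe y (MVSup x y) := by
  rw [MVSup, oplus_comm]
  exact mvLe_oplus_right y _

theorem mvLe_mvSup_left (x y : A) : MVLe x (MVSup x y) := by
  rw [mvSup_comm]
  exact mvLe_mvSup_right y x

theorem mvSup_mvLe {x y z : A} (hxz : MVLe x z) (hyz : MVLe y z) : MVLe (MVSup x y) z := by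
  have h : MVLe (MVSup x y) (MVSup z y) :=
    oplus_mvLe_oplus_right (odot_mvLe_odot_right hxz (mvneg y)) y
  rwa [mvSup_comm z, mvSup_eq_right hyz] at h

theorem mvSup_mvLe_oplus (x y : A) : MVLe (MVSup x y) (oplus x y) :=
  oplus_mvLe_oplus_right (odot_mvLe_left x (mvneg y)) y

theorem mvInf_eq_mvneg_mvSup (x y : A) : MVInf x y = mvneg (MVSup (mvneg x) (mvneg y)) := by
  have h := lukasiewicz (mvneg x) (mvneg y)
  unfold MVInf MVSup odot
  rw [mvneg_mvneg, mvneg_mvneg] at h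
  rw [mvneg_mvneg, mvneg_mvneg, h, oplus_comm y, oplus_comm _ (mvneg x)]

theorem mvInf_comm (x y : A) : MVInf x y = MVInf y x := by
  rw [mvInf_eq_mvneg_mvSup, mvInf_eq_mvneg_mvSup, mvSup_comm]

theorem mvInf_self (x : A) : MVInf x x = x := by
  rw [mvInf_eq_mvneg_mvSup, mvSup_self, mvneg_mvneg]

theorem mvInf_mvLe_left (x y : A) : MVLe (MVInf x y) x := by
  have h := mvneg_mvLe_mvneg (mvLe_mvSup_left (mvneg x) (mvneg y))
  rwa [mvneg_mvneg, ← mvInf_eq_mvneg_mvSup] at h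

theorem mvInf_mvLe_right (x y : A) : MVLe (MVInf x y) y := by
  rw [mvInf_comm]
  exact mvInf_mvLe_left y x

theorem mvLe_mvInf {x y z : A} (hzx : MVLe z x) (hzy : MVLe z y) : MVLe z (MVInf x y) := by
  have h := mvneg_mvLe_mvneg (mvSup_mvLe (mvneg_mvLe_mvneg hzx) (mvneg_mvLe_mvneg hzy))
  rwa [mvneg_mvneg, ← mvInf_eq_mvneg_mvSup] at h

theorem oplus_mvInf_mvInf_eq {x x' y y' : A} (hx : oplus x x' = x) (hy : oplus y y' = y) :
    oplus (MVInf x y) (MVInf x' y') = MVInf x y := by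
  refine mvLe_antisymm (mvLe_mvInf ?_ ?_) (mvLe_oplus_right _ _)
  · simpa only [hx] using oplus_mvLe_oplus (mvInf_mvLe_left x y) (mvInf_mvLe_left x' y')
  · simpa only [hy] using oplus_mvLe_oplus (mvInf_mvLe_right x y) (mvInf_mvLe_right x' y')

theorem oplus_oplus_eq_of_oplus_eq {x x' : A} (h : oplus x x' = x) (t : A) :
    oplus (oplus t x) x' = oplus t x := by
  rw [← oplus_assoc, h]

theorem oplus_mvSup_mvSup_eq {x x' y y' : A} (hx : oplus x x' = x) (hy : oplus y y' = y) :
    oplus (MVSup x y) (MVSup x' y') = MVSup x y := by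
  have hy' : oplus (MVSup x y) y' = MVSup x y := oplus_oplus_eq_of_oplus_eq hy _
  have hx' : oplus (MVSup x y) x' = MVSup x y := by
    rw [mvSup_comm]
    exact oplus_oplus_eq_of_oplus_eq hx _
  refine mvLe_antisymm ?_ (mvLe_oplus_right _ _)
  have h := oplus_mvLe_oplus_left (mvSup_mvLe_oplus x' y') (MVSup x y)
  rwa [oplus_assoc, hx', hy'] at h

end MVAlgebra

theorem Good.map₂ {A : Type*} [MVAlgebra A] {f : A → A → A}
    (hstep : ∀ {x x' y y' : A}, oplus x x' = x → oplus y y' = y →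
      oplus (f x y) (f x' y') = f x y)
    (hzero : f 0 0 = 0) {a b : ℕ → A} (ha : Good a) (hb : Good b) :
    Good fun i => f (a i) (b i) := by
  obtain ⟨ha, Na, ha0⟩ := ha
  obtain ⟨hb, Nb, hb0⟩ := hb
  refine ⟨fun i => hstep (ha i) (hb i), max Na Nb, fun m hm => ?_⟩
  show f (a m) (b m) = 0
  rw [ha0 m (le_of_max_le_left hm), hb0 m (le_of_max_le_right hm), hzero]

/-- For good sequences `a`, `b`, the componentwise infimum and supremum are again
good sequences, and they are respectively the infimum and the supremum of `a` and
`b` for the pointwise partial order (`a ≤ b` iff `aᵢ ≤ bᵢ` for all `i`). -/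
theorem good_sequences_lattice (A : Type*) [MVAlgebra A]
    (a b : ℕ → A) (ha : Good a) (hb : Good b) :
    Good (fun i => MVInf (a i) (b i)) ∧ Good (fun i => MVSup (a i) (b i)) ∧
    (∀ i, MVLe (MVInf (a i) (b i)) (a i)) ∧
    (∀ i, MVLe (MVInf (a i) (b i)) (b i)) ∧
    (∀ c : ℕ → A, Good c → (∀ i, MVLe (c i) (a i)) → (∀ i, MVLe (c i) (b i)) →
      ∀ i, MVLe (c i) (MVInf (a i) (b i))) ∧
    (∀ i, MVLe (a i) (MVSup (a i) (b i))) ∧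
    (∀ i, MVLe (b i) (MVSup (a i) (b i))) ∧
    (∀ c : ℕ → A, Good c → (∀ i, MVLe (a i) (c i)) → (∀ i, MVLe (b i) (c i)) →
      ∀ i, MVLe (MVSup (a i) (b i)) (c i)) :=
  ⟨ha.map₂ oplus_mvInf_mvInf_eq (mvInf_self 0) hb,
    ha.map₂ oplus_mvSup_mvSup_eq (mvSup_self 0) hb,
    fun i => mvInf_mvLe_left (a i) (b i),
    fun i => mvInf_mvLe_right (a i) (b i),
    fun _ _ hca hcb i => mvLe_mvInf (hca i) (hcb i),
    fun i => mvLe_mvSup_left (a i) (b i),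
    fun i => mvLe_mvSup_right (a i) (b i),
    fun _ _ hac hbc i => mvSup_mvLe (hac i) (hbc i)⟩
end

section
/- Let G be an abelian ℓ-group with strong unit u. The map sending a good sequence (a₁, …, aₙ) with values in the unit interval [0,u] to the element a₁ + … + aₙ of the positive cone G⁺ is a monoid homomorphism from the monoid of good sequences of the MV-algebra Γ(G) = [0,u] to (G⁺, +) which moreover preserves inf and sup, and it is bijective. -/
/-- A good sequence with values in the unit interval `[0,u]` of an abelian
ℓ-group: `0 ≤ sᵢ ≤ u`, `sᵢ ⊕ sᵢ₊₁ = sᵢ` (where `x ⊕ y = inf(u, x+y)`), and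
eventually zero. -/
def GoodI {G : Type*} [Lattice G] [AddCommGroup G] (u : G) (s : ℕ → G) : Prop :=
  (∀ i, 0 ≤ s i ∧ s i ≤ u) ∧ (∀ i, u ⊓ (s i + s (i + 1)) = s i) ∧
    ∃ N, ∀ m, N ≤ m → s m = 0

/-- The sum of good sequences in the MV-algebra `[0,u]`:
`(a + b)ₙ = aₙ ⊕ (aₙ₋₁ ⊙ b₀) ⊕ … ⊕ (a₀ ⊙ bₙ₋₁) ⊕ bₙ`, where
`x ⊕ y = inf(u, x+y)`, `¬x = u - x` and `x ⊙ y = ¬(¬x ⊕ ¬y)`. -/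
def addGoodI {G : Type*} [Lattice G] [AddCommGroup G] (u : G) (a b : ℕ → G) :
    ℕ → G := fun n =>
  ((List.range n).map
      (fun j => u - (u ⊓ ((u - a (n - 1 - j)) + (u - b j))))).foldr
    (fun p q => u ⊓ (p + q)) (u ⊓ (a n + b n))

/-!
Every good sequence `s` is the canonical sequence `sₙ = g ⊓ (n + 1) • u - g ⊓ n • u` of its sum `g`:
the partial sum `s₀ + ⋯ + sₙ₋₁` equals `g ⊓ n • u`, because the tail `sₙ + sₙ₊₁ + ⋯` is disjoint
from `(u - s₀) + ⋯ + (u - sₙ₋₁)`. This gives injectivity and, since `g ↦ ((g - n • u) ⊓ u)⁺` is a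
lattice homomorphism, preservation of `⊓` and `⊔`; surjectivity is the strong unit. For the monoid
law, the `⊙`-terms of `(a + b)ₙ` add up to a carry `cₙ` with `cₙ₊₁ = (aₙ + bₙ + cₙ - u)⁺`, so
`(a + b)ₙ = u ⊓ (aₙ + bₙ + cₙ) = aₙ + bₙ + cₙ - cₙ₊₁` and the sum telescopes.
-/

open Finset

lemma inf_eq_zero_of_le {α : Type*} [Lattice α] [Zero α] {w y z : α} (hw : 0 ≤ w) (hwy : w ≤ y)
    (h : y ⊓ z = 0) : w ⊓ z = 0 :=
  le_antisymm (h ▸ inf_le_inf_right z hwy) (le_inf hw (h ▸ inf_le_right))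

lemma finsum_eq_sum_range_of_eq_zero {M : Type*} [AddCommMonoid M] {s : ℕ → M} {N : ℕ}
    (hN : ∀ m, N ≤ m → s m = 0) : ∑ᶠ i, s i = ∑ i ∈ range N, s i :=
  finsum_eq_sum_of_support_subset s fun i hi => by
    simpa using not_le.1 (mt (hN i) hi)

section

variable {G : Type*} [Lattice G] [AddCommGroup G]

section LatticeOrderedGroup

variable [AddLeftMono G]

lemma add_inf_eq_zero {x y z : G} (hx : x ⊓ z = 0) (hy : y ⊓ z = 0) : (x + y) ⊓ z = 0 := by
  have hx0 : 0 ≤ x := hx ▸ inf_le_left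
  have hy0 : 0 ≤ y := hy ▸ inf_le_left
  have hz0 : 0 ≤ z := hx ▸ inf_le_right
  refine le_antisymm ?_ (le_inf (add_nonneg hx0 hy0) hz0)
  have hle_y : (x + y) ⊓ z ≤ y :=
    calc (x + y) ⊓ z ≤ (x + y) ⊓ (z + y) := inf_le_inf_left _ (le_add_of_nonneg_right hy0)
      _ = y := by rw [← inf_add, hx, zero_add]
  exact hy ▸ le_inf hle_y inf_le_right

lemma sum_inf_eq_zero {ι : Type*} {s : Finset ι} {f : ι → G} {z : G} (hz : 0 ≤ z)
    (h : ∀ i ∈ s, f i ⊓ z = 0) : (∑ i ∈ s, f i) ⊓ z = 0 :=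
  Finset.sum_induction f (· ⊓ z = 0) (fun _ _ => add_inf_eq_zero) (inf_eq_left.2 hz) h

lemma inf_add_eq_left_iff {u x y : G} : u ⊓ (x + y) = x ↔ (u - x) ⊓ y = 0 := by
  have h : (u - x) ⊓ y + x = u ⊓ (x + y) := by rw [inf_add, sub_add_cancel, add_comm y]
  rw [← h, add_eq_right]

lemma posPart_sub_inf_posPart_sub (x y : G) : (x - y)⁺ ⊓ (y - x)⁺ = 0 := by
  simpa [negPart_def, posPart_def] using posPart_inf_negPart_eq_zero (x - y)

lemma le_posPart_of_sub_le {x y z : G} (hxy : x - y ≤ z) (hzx : z ⊓ x ≤ 0) : x ≤ y⁺ := by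
  rw [← sub_nonpos, posPart_def, sub_sup, sub_zero]
  exact (inf_le_inf_right x hxy).trans hzx

lemma posPart_sub_add_posPart_le {u a₀ a₁ b w : G} (ha : a₁ ≤ a₀) :
    (a₁ - a₀ + (a₀ + b - u)⁺ + w - u)⁺ ≤ (a₁ + b - u)⁺ + (w - u)⁺ := by
  have hcarry : (a₀ + b - u)⁺ ≤ (a₁ + b - u)⁺ + (a₀ - a₁) := by
    refine sup_le ?_ (add_nonneg (posPart_nonneg _) (sub_nonneg.2 ha))
    calc a₀ + b - u = (a₁ + b - u) + (a₀ - a₁) := by abel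
      _ ≤ (a₁ + b - u)⁺ + (a₀ - a₁) := by gcongr; exact le_posPart _
  refine sup_le ?_ (add_nonneg (posPart_nonneg _) (posPart_nonneg _))
  calc a₁ - a₀ + (a₀ + b - u)⁺ + w - u = (a₁ - a₀) + (a₀ + b - u)⁺ + (w - u) := by abel
    _ ≤ (a₁ - a₀) + ((a₁ + b - u)⁺ + (a₀ - a₁)) + (w - u)⁺ := by gcongr; exact le_posPart _
    _ = (a₁ + b - u)⁺ + (w - u)⁺ := by abel

lemma le_posPart_sub_add_posPart {u a₀ a₁ b w : G} (ha₁ : 0 ≤ a₁) (ha₀ : a₀ ≤ u) (hb : b ≤ u)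
    (hw : a₀ ≤ w) (hdis : (u - a₀) ⊓ a₁ = 0) (hdis' : (u - b) ⊓ (w - u)⁺ = 0) :
    (a₁ + b - u)⁺ + (w - u)⁺ ≤ (a₁ - a₀ + (a₀ + b - u)⁺ + w - u)⁺ := by
  set D := (w - u)⁺
  set E := (u - w)⁺
  have hDE : D ⊓ E = 0 := posPart_sub_inf_posPart_sub w u
  have hEa₁ : E ⊓ a₁ = 0 :=
    inf_eq_zero_of_le (posPart_nonneg _) (sup_le (sub_le_sub_left hw u) (sub_nonneg.2 ha₀)) hdis
  have hY : a₁ + b - u - E + D ≤ a₁ - a₀ + (a₀ + b - u)⁺ + w - u := by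
    have hwu : w - u = D - E := by rw [← posPart_sub_negPart (w - u), negPart_def, neg_sub]; rfl
    calc a₁ + b - u - E + D = (a₁ - a₀) + (a₀ + b - u) + (w - u) := by rw [hwu]; abel
      _ ≤ (a₁ - a₀) + (a₀ + b - u)⁺ + (w - u) := by gcongr; exact le_posPart _
      _ = a₁ - a₀ + (a₀ + b - u)⁺ + w - u := by abel
  have hD : D ≤ (a₁ + b - u - E + D)⁺ := by
    refine le_posPart_of_sub_le (z := u - b + E) ?_ (add_inf_eq_zero hdis' (inf_comm E D ▸ hDE)).le
    calc D - (a₁ + b - u - E + D) = u - b + E - a₁ := by abel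
      _ ≤ u - b + E := sub_le_self _ ha₁
  have hbD : a₁ + b - u + D ≤ (a₁ + b - u - E + D)⁺ := by
    refine le_posPart_of_sub_le (z := E) (le_of_eq (by abel)) ?_
    calc E ⊓ (a₁ + b - u + D) ≤ E ⊓ (a₁ + D) :=
          inf_le_inf_left _ (by gcongr; exact sub_le_iff_le_add.2 (by gcongr))
      _ = 0 := by
          rw [inf_comm]
          exact add_inf_eq_zero (inf_comm E a₁ ▸ hEa₁) (inf_comm D E ▸ hDE)
  calc (a₁ + b - u)⁺ + D = (a₁ + b - u + D) ⊔ D := by rw [posPart_def, sup_add, zero_add]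
    _ ≤ (a₁ + b - u - E + D)⁺ := sup_le hbD hD
    _ ≤ _ := posPart_mono hY

/-- The inductive step of `carry_succ`, with `a₀ = aₘ`, `a₁ = aₘ₊₁`, `b = b₀` and
`w = aₘ + bₘ₊₁ + carry u a (fun j => b (j + 1)) m`. -/
lemma posPart_sub_add_posPart {u a₀ a₁ b w : G} (ha₁ : 0 ≤ a₁) (ha : a₁ ≤ a₀) (ha₀ : a₀ ≤ u)
    (hb : b ≤ u) (hw : a₀ ≤ w) (hdis : (u - a₀) ⊓ a₁ = 0) (hdis' : (u - b) ⊓ (w - u)⁺ = 0) :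
    (a₁ - a₀ + (a₀ + b - u)⁺ + w - u)⁺ = (a₁ + b - u)⁺ + (w - u)⁺ :=
  (posPart_sub_add_posPart_le ha).antisymm (le_posPart_sub_add_posPart ha₁ ha₀ hb hw hdis hdis')

end LatticeOrderedGroup

namespace GoodI

variable {u : G} {s : ℕ → G}

lemma nonneg (hs : GoodI u s) (i : ℕ) : 0 ≤ s i := (hs.1 i).1

lemma le (hs : GoodI u s) (i : ℕ) : s i ≤ u := (hs.1 i).2

lemma shift (hs : GoodI u s) : GoodI u (fun i => s (i + 1)) := by
  obtain ⟨N, hN⟩ := hs.2.2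
  exact ⟨fun i => hs.1 (i + 1), fun i => hs.2.1 (i + 1), N, fun m hm => hN (m + 1) (by omega)⟩

variable [AddLeftMono G]

lemma sub_inf_succ (hs : GoodI u s) (i : ℕ) : (u - s i) ⊓ s (i + 1) = 0 :=
  inf_add_eq_left_iff.1 (hs.2.1 i)

lemma antitone (hs : GoodI u s) : Antitone s := by
  refine antitone_nat_of_succ_le fun i => ?_
  calc s (i + 1) = s (i + 1) - (u - s i) ⊓ s (i + 1) := by rw [hs.sub_inf_succ, sub_zero]
    _ = (s (i + 1) - (u - s i)) ⊔ 0 := by rw [sub_inf, sub_self]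
    _ ≤ s i := sup_le (sub_le_iff_le_add.2 (by rw [add_sub_cancel]; exact hs.le _)) (hs.nonneg i)

lemma sub_inf_of_lt (hs : GoodI u s) {i j : ℕ} (hij : i < j) : (u - s i) ⊓ s j = 0 := by
  rw [inf_comm]
  exact inf_eq_zero_of_le (hs.nonneg j) (hs.antitone hij) (inf_comm (u - s i) _ ▸ hs.sub_inf_succ i)

lemma sum_range_inf_nsmul (hs : GoodI u s) {n M : ℕ} (hnM : n ≤ M) :
    (∑ i ∈ range M, s i) ⊓ n • u = ∑ i ∈ range n, s i := by
  set σ := ∑ i ∈ range n, s i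
  have hσ : σ + ∑ i ∈ range n, (u - s i) = n • u := by
    rw [← sum_add_distrib]
    simp
  have htail : (∑ i ∈ Ico n M, s i) ⊓ ∑ i ∈ range n, (u - s i) = 0 := by
    refine sum_inf_eq_zero (sum_nonneg fun i _ => sub_nonneg.2 (hs.le i)) fun i hi => ?_
    rw [inf_comm]
    refine sum_inf_eq_zero (hs.nonneg i) fun j hj => ?_
    exact hs.sub_inf_of_lt ((mem_range.1 hj).trans_le (mem_Ico.1 hi).1)
  rw [← sum_range_add_sum_Ico s hnM, ← hσ, ← add_inf, htail, add_zero]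

lemma finsum_nonneg (hs : GoodI u s) : 0 ≤ ∑ᶠ i, s i := by
  obtain ⟨N, hN⟩ := hs.2.2
  rw [finsum_eq_sum_range_of_eq_zero hN]
  exact sum_nonneg fun i _ => hs.nonneg i

lemma exists_finsum_le_nsmul (hs : GoodI u s) : ∃ N : ℕ, ∑ᶠ i, s i ≤ N • u := by
  obtain ⟨N, hN⟩ := hs.2.2
  refine ⟨N, ?_⟩
  rw [finsum_eq_sum_range_of_eq_zero hN]
  simpa using sum_le_card_nsmul (range N) s u fun i _ => hs.le i

end GoodI

/-- The `n`-th term is `g` cut to the slice `[n • u, (n + 1) • u]`,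
shifted down to `[0, u]`. -/
def canonicalSeq (u g : G) (n : ℕ) : G := ((g - n • u) ⊓ u)⁺

section canonicalSeq

variable [AddLeftMono G] {u g : G}

lemma canonicalSeq_eq_sub (hu : 0 ≤ u) (g : G) (n : ℕ) :
    canonicalSeq u g n = g ⊓ (n + 1) • u - g ⊓ n • u := by
  set x := g - n • u
  have hupper : g ⊓ (n + 1) • u = x ⊓ u + n • u := by
    rw [inf_add, sub_add_cancel, succ_nsmul, add_comm (n • u)]
  have hlower : g ⊓ n • u = x ⊓ 0 + n • u := by rw [inf_add, sub_add_cancel, zero_add]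
  have hx : x ⊓ u ⊓ 0 = x ⊓ 0 := by rw [inf_assoc, inf_eq_right.2 hu]
  rw [canonicalSeq, hupper, hlower, add_sub_add_right_eq_sub, ← hx, ← neg_neg (x ⊓ u ⊓ 0),
    ← negPart_eq_neg_inf_zero, sub_neg_eq_add]
  exact sub_eq_iff_eq_add.1 (posPart_sub_negPart _)

lemma canonicalSeq_eq_zero (hu : 0 ≤ u) {N : ℕ} (hgN : g ≤ N • u) {m : ℕ} (hm : N ≤ m) :
    canonicalSeq u g m = 0 :=
  posPart_eq_zero.2 <| inf_le_left.trans <| sub_nonpos.2 <|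
    hgN.trans (nsmul_le_nsmul_left hu hm)

lemma canonicalSeq_good (hu : 0 ≤ u) {N : ℕ} (hgN : g ≤ N • u) : GoodI u (canonicalSeq u g) := by
  refine ⟨fun _ => ⟨posPart_nonneg _, sup_le inf_le_right hu⟩, fun i => ?_,
    N, fun m => canonicalSeq_eq_zero hu hgN⟩
  refine inf_add_eq_left_iff.2 (le_antisymm ?_ (le_inf (sub_nonneg.2 (sup_le inf_le_right hu))
    (posPart_nonneg _)))
  set x := g - i • u
  have hcomplement : u - canonicalSeq u g i ≤ (u - x)⁺ := by
    rw [canonicalSeq, posPart_def, sub_sup, sub_inf, sub_self]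
    exact inf_le_left
  have hnext : canonicalSeq u g (i + 1) ≤ (x - u)⁺ := by
    have : g - (i + 1) • u = x - u := by rw [succ_nsmul, sub_add_eq_sub_sub]
    rw [canonicalSeq, this]
    exact sup_le_sup_right inf_le_left 0
  calc (u - canonicalSeq u g i) ⊓ canonicalSeq u g (i + 1) ≤ (u - x)⁺ ⊓ (x - u)⁺ :=
        inf_le_inf hcomplement hnext
    _ = 0 := posPart_sub_inf_posPart_sub u x

lemma finsum_canonicalSeq (hu : 0 ≤ u) (hg : 0 ≤ g) {N : ℕ} (hgN : g ≤ N • u) :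
    ∑ᶠ i, canonicalSeq u g i = g := by
  rw [finsum_eq_sum_range_of_eq_zero fun m => canonicalSeq_eq_zero hu hgN]
  simp only [canonicalSeq_eq_sub hu]
  rw [sum_range_sub (fun i => g ⊓ i • u), zero_smul, inf_eq_right.2 hg, sub_zero, inf_eq_left.2 hgN]

lemma canonicalSeq_inf (g h : G) (n : ℕ) :
    canonicalSeq u (g ⊓ h) n = canonicalSeq u g n ⊓ canonicalSeq u h n := by
  let _ := AddCommGroup.toDistribLattice G
  rw [canonicalSeq, canonicalSeq, canonicalSeq, inf_sub, inf_inf_distrib_right, posPart_def,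
    sup_inf_right]
  rfl

lemma canonicalSeq_sup (g h : G) (n : ℕ) :
    canonicalSeq u (g ⊔ h) n = canonicalSeq u g n ⊔ canonicalSeq u h n := by
  let _ := AddCommGroup.toDistribLattice G
  rw [canonicalSeq, canonicalSeq, canonicalSeq, sup_sub, inf_sup_right, posPart_def,
    posPart_def, posPart_def, sup_sup_sup_comm, sup_idem]

end canonicalSeq

namespace GoodI

variable [AddLeftMono G] {u : G} {s t : ℕ → G}

lemma eq_canonicalSeq (hs : GoodI u s) (hu : 0 ≤ u) (n : ℕ) :
    s n = canonicalSeq u (∑ᶠ i, s i) n := by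
  obtain ⟨N, hN⟩ := hs.2.2
  have hsum : ∑ᶠ i, s i = ∑ i ∈ range (max (n + 1) N), s i :=
    finsum_eq_sum_range_of_eq_zero fun m hm => hN m (le_of_max_le_right hm)
  rw [canonicalSeq_eq_sub hu, hsum, hs.sum_range_inf_nsmul (le_max_left _ _),
    hs.sum_range_inf_nsmul (by omega), sum_range_succ, add_sub_cancel_left]

lemma finsum_inf (hs : GoodI u s) (ht : GoodI u t) (hu : 0 ≤ u) :
    ∑ᶠ i, (s i ⊓ t i) = (∑ᶠ i, s i) ⊓ ∑ᶠ i, t i := by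
  obtain ⟨_, hN⟩ := hs.exists_finsum_le_nsmul
  calc ∑ᶠ i, (s i ⊓ t i) = ∑ᶠ i, canonicalSeq u ((∑ᶠ i, s i) ⊓ ∑ᶠ i, t i) i :=
        finsum_congr fun i => by
          rw [canonicalSeq_inf, ← hs.eq_canonicalSeq hu, ← ht.eq_canonicalSeq hu]
    _ = (∑ᶠ i, s i) ⊓ ∑ᶠ i, t i :=
        finsum_canonicalSeq hu (le_inf hs.finsum_nonneg ht.finsum_nonneg) (inf_le_left.trans hN)

lemma finsum_sup (hs : GoodI u s) (ht : GoodI u t) (hu : 0 ≤ u) :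
    ∑ᶠ i, (s i ⊔ t i) = (∑ᶠ i, s i) ⊔ ∑ᶠ i, t i := by
  obtain ⟨M, hM⟩ := hs.exists_finsum_le_nsmul
  obtain ⟨N, hN⟩ := ht.exists_finsum_le_nsmul
  have hbound : (∑ᶠ i, s i) ⊔ ∑ᶠ i, t i ≤ (M + N) • u :=
    sup_le (hM.trans (nsmul_le_nsmul_left hu (by omega)))
      (hN.trans (nsmul_le_nsmul_left hu (by omega)))
  calc ∑ᶠ i, (s i ⊔ t i) = ∑ᶠ i, canonicalSeq u ((∑ᶠ i, s i) ⊔ ∑ᶠ i, t i) i :=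
        finsum_congr fun i => by
          rw [canonicalSeq_sup, ← hs.eq_canonicalSeq hu, ← ht.eq_canonicalSeq hu]
    _ = (∑ᶠ i, s i) ⊔ ∑ᶠ i, t i :=
        finsum_canonicalSeq hu (hs.finsum_nonneg.trans le_sup_left) hbound

lemma eq_of_finsum_eq (hs : GoodI u s) (ht : GoodI u t) (hu : 0 ≤ u)
    (hst : ∑ᶠ i, s i = ∑ᶠ i, t i) : s = t :=
  funext fun n => by rw [hs.eq_canonicalSeq hu, ht.eq_canonicalSeq hu, hst]

end GoodI

/-- As `a_{m-1-j} ⊙ b_j = (a_{m-1-j} + b_j - u)⁺`, this is the sum of the `⊙`-terms of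
`addGoodI u a b m`. -/
def carry (u : G) (a b : ℕ → G) (m : ℕ) : G :=
  ∑ j ∈ range m, (a (m - 1 - j) + b j - u)⁺

section carry

variable {u : G}

lemma carry_zero (a b : ℕ → G) : carry u a b 0 = 0 := sum_range_zero _

lemma carry_succ_eq_carry_shift (a b : ℕ → G) (m : ℕ) :
    carry u a b (m + 1) = carry u a (fun j => b (j + 1)) m + (a m + b 0 - u)⁺ := by
  rw [carry, sum_range_succ', carry, Nat.add_sub_cancel, Nat.sub_zero]
  congr 1
  exact sum_congr rfl fun j _ => by rw [show m - (j + 1) = m - 1 - j by omega]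

variable [AddLeftMono G]

lemma carry_nonneg (a b : ℕ → G) (m : ℕ) : 0 ≤ carry u a b m :=
  sum_nonneg fun _ _ => posPart_nonneg _

lemma sub_inf_carry_shift {a b : ℕ → G} (ha : GoodI u a) (hb : GoodI u b) (m : ℕ) :
    (u - b 0) ⊓ carry u a (fun j => b (j + 1)) m = 0 := by
  rw [inf_comm]
  refine sum_inf_eq_zero (sub_nonneg.2 (hb.le 0)) fun j _ => ?_
  refine inf_eq_zero_of_le (posPart_nonneg _) (sup_le ?_ (hb.nonneg _))
    (inf_comm (u - b 0) _ ▸ hb.sub_inf_of_lt j.succ_pos)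
  exact sub_le_iff_le_add.2 (by rw [add_comm]; gcongr; exact ha.le _)

lemma carry_succ {a b : ℕ → G} (ha : GoodI u a) (hb : GoodI u b) (m : ℕ) :
    carry u a b (m + 1) = (a m + b m + carry u a b m - u)⁺ := by
  induction m generalizing b with
  | zero => rw [carry_zero, add_zero, carry_succ_eq_carry_shift, carry_zero, zero_add]
  | succ m ih =>
    have ih' := ih hb.shift
    have hw : a m ≤ a m + b (m + 1) + carry u a (fun j => b (j + 1)) m :=
      le_add_of_le_of_nonneg (le_add_of_nonneg_right (hb.nonneg _)) (carry_nonneg _ _ m)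
    have hstep := posPart_sub_add_posPart (ha.nonneg (m + 1)) (ha.antitone m.le_succ) (ha.le m)
      (hb.le 0) hw (ha.sub_inf_succ m) (ih' ▸ sub_inf_carry_shift ha hb (m + 1))
    rw [carry_succ_eq_carry_shift a b (m + 1), ih', add_comm, ← hstep,
      carry_succ_eq_carry_shift a b m]
    congr 1
    abel

lemma carry_eq_zero {a b : ℕ → G} (ha : GoodI u a) (hb : GoodI u b) {Na Nb : ℕ}
    (hNa : ∀ m, Na ≤ m → a m = 0) (hNb : ∀ m, Nb ≤ m → b m = 0) {m : ℕ} (hm : Na + Nb ≤ m) :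
    carry u a b m = 0 := by
  refine sum_eq_zero fun j hj => posPart_eq_zero.2 ?_
  rcases lt_or_ge j Nb with hj' | hj'
  · rw [hNa _ (by have := mem_range.1 hj; omega), zero_add, sub_nonpos]
    exact hb.le j
  · rw [hNb _ hj', add_zero, sub_nonpos]
    exact ha.le _

end carry

section addGoodI

variable [AddLeftMono G]

lemma foldr_inf_add (u c : G) {n : ℕ} {f : ℕ → G} (hf : ∀ j < n, 0 ≤ f j) :
    ((List.range n).map f).foldr (fun p q => u ⊓ (p + q)) (u ⊓ c) =
      u ⊓ (∑ j ∈ range n, f j + c) := by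
  induction n generalizing f with
  | zero => simp
  | succ n ih =>
    rw [List.range_succ_eq_map, List.map_cons, List.map_map, List.foldr_cons,
      ih (f := f ∘ Nat.succ) fun j hj => hf (j + 1) (by omega), add_inf, ← inf_assoc,
      inf_eq_left.2 (le_add_of_nonneg_left (hf 0 n.succ_pos)), sum_range_succ', add_comm _ (f 0),
      add_assoc]
    rfl

lemma addGoodI_eq_inf (u : G) (a b : ℕ → G) (n : ℕ) :
    addGoodI u a b n = u ⊓ (a n + b n + carry u a b n) := by
  have hterm : ∀ j, u - u ⊓ ((u - a (n - 1 - j)) + (u - b j)) = (a (n - 1 - j) + b j - u)⁺ :=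
    fun j => by rw [inf_eq_sub_posPart_sub, sub_sub_cancel]; congr 1; abel
  rw [addGoodI, funext hterm, foldr_inf_add u _ fun j _ => posPart_nonneg _, carry, add_comm]

namespace GoodI

variable {u : G} {a b : ℕ → G}

lemma addGoodI_eq_sub (ha : GoodI u a) (hb : GoodI u b) (n : ℕ) :
    addGoodI u a b n = a n + b n + carry u a b n - carry u a b (n + 1) := by
  rw [addGoodI_eq_inf, inf_comm, inf_eq_sub_posPart_sub, ← carry_succ ha hb]

lemma addGoodI_eq_zero (ha : GoodI u a) (hb : GoodI u b) (hu : 0 ≤ u) {Na Nb : ℕ}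
    (hNa : ∀ m, Na ≤ m → a m = 0) (hNb : ∀ m, Nb ≤ m → b m = 0) {m : ℕ} (hm : Na + Nb ≤ m) :
    addGoodI u a b m = 0 := by
  rw [addGoodI_eq_inf, carry_eq_zero ha hb hNa hNb hm, hNa m (by omega), hNb m (by omega),
    add_zero, add_zero, inf_eq_right.2 hu]

lemma add_add_carry_nonneg (ha : GoodI u a) (hb : GoodI u b) (n : ℕ) :
    0 ≤ a n + b n + carry u a b n :=
  add_nonneg (add_nonneg (ha.nonneg n) (hb.nonneg n)) (carry_nonneg a b n)

lemma add (ha : GoodI u a) (hb : GoodI u b) (hu : 0 ≤ u) : GoodI u (addGoodI u a b) := by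
  obtain ⟨Na, hNa⟩ := ha.2.2
  obtain ⟨Nb, hNb⟩ := hb.2.2
  refine ⟨fun i => ?_, fun m => inf_add_eq_left_iff.2 ?_,
    Na + Nb, fun m => ha.addGoodI_eq_zero hb hu hNa hNb⟩
  · rw [addGoodI_eq_inf]
    exact ⟨le_inf hu (ha.add_add_carry_nonneg hb i), inf_le_left⟩
  set S := a m + b m + carry u a b m
  -- `u - (a + b)ₘ = (u - Sₘ)⁺` is disjoint from each summand of `Sₘ₊₁ = aₘ₊₁ + bₘ₊₁ + (Sₘ - u)⁺`
  have hcompl : u - addGoodI u a b m = (u - S)⁺ := by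
    rw [addGoodI_eq_inf, inf_eq_sub_posPart_sub, sub_sub_cancel]
  have hSa : a m ≤ S :=
    le_add_of_le_of_nonneg (le_add_of_nonneg_right (hb.nonneg m)) (carry_nonneg a b m)
  have hSb : b m ≤ S :=
    le_add_of_le_of_nonneg (le_add_of_nonneg_left (ha.nonneg m)) (carry_nonneg a b m)
  have hdisa : (u - S)⁺ ⊓ a (m + 1) = 0 :=
    inf_eq_zero_of_le (posPart_nonneg _) (sup_le (sub_le_sub_left hSa u) (sub_nonneg.2 (ha.le m)))
      (ha.sub_inf_succ m)
  have hdisb : (u - S)⁺ ⊓ b (m + 1) = 0 :=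
    inf_eq_zero_of_le (posPart_nonneg _) (sup_le (sub_le_sub_left hSb u) (sub_nonneg.2 (hb.le m)))
      (hb.sub_inf_succ m)
  have hdis : (a (m + 1) + b (m + 1) + carry u a b (m + 1)) ⊓ (u - S)⁺ = 0 := by
    rw [carry_succ ha hb m]
    refine add_inf_eq_zero (add_inf_eq_zero (inf_comm (u - S)⁺ _ ▸ hdisa)
      (inf_comm (u - S)⁺ _ ▸ hdisb)) ?_
    exact posPart_sub_inf_posPart_sub S u
  rw [hcompl, inf_comm, addGoodI_eq_inf]
  exact inf_eq_zero_of_le (le_inf hu (ha.add_add_carry_nonneg hb _)) inf_le_right hdis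

lemma finsum_addGoodI (ha : GoodI u a) (hb : GoodI u b) (hu : 0 ≤ u) :
    ∑ᶠ i, addGoodI u a b i = (∑ᶠ i, a i) + ∑ᶠ i, b i := by
  obtain ⟨Na, hNa⟩ := ha.2.2
  obtain ⟨Nb, hNb⟩ := hb.2.2
  have hNa' : ∀ m, Na + Nb ≤ m → a m = 0 := fun m hm => hNa m (by omega)
  have hNb' : ∀ m, Na + Nb ≤ m → b m = 0 := fun m hm => hNb m (by omega)
  rw [finsum_eq_sum_range_of_eq_zero fun m => ha.addGoodI_eq_zero hb hu hNa hNb,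
    finsum_eq_sum_range_of_eq_zero hNa', finsum_eq_sum_range_of_eq_zero hNb']
  simp only [ha.addGoodI_eq_sub hb, add_sub_assoc, sum_add_distrib]
  rw [sum_range_sub' (carry u a b), carry_zero, carry_eq_zero ha hb hNa hNb le_rfl, sub_zero,
    add_zero]

end GoodI

end addGoodI

end

/-- For an abelian ℓ-group `G` with strong unit `u`, the map sending a good
sequence with values in `[0,u]` to its sum `a₁ + … + aₙ` is a monoid
homomorphism from the monoid of good sequences of `Γ(G) = [0,u]` to the positive
cone `(G⁺, +)`, it preserves (componentwise) inf and sup, and it is bijective. -/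
theorem good_sequences_monoid_iso_positive_cone (G : Type*)
    [Lattice G] [AddCommGroup G] [CovariantClass G G (· + ·) (· ≤ ·)]
    (u : G) (hu : 0 ≤ u) (hstrong : ∀ x : G, ∃ n : ℕ, x ≤ n • u) :
    (∀ s : ℕ → G, GoodI u s → 0 ≤ ∑ᶠ i, s i) ∧
    (∑ᶠ i : ℕ, (0 : G)) = 0 ∧
    (∀ s t : ℕ → G, GoodI u s → GoodI u t → GoodI u (addGoodI u s t)) ∧
    (∀ s t : ℕ → G, GoodI u s → GoodI u t →
      (∑ᶠ i, addGoodI u s t i) = (∑ᶠ i, s i) + ∑ᶠ i, t i) ∧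
    (∀ s t : ℕ → G, GoodI u s → GoodI u t →
      (∑ᶠ i, (s i ⊓ t i)) = (∑ᶠ i, s i) ⊓ ∑ᶠ i, t i) ∧
    (∀ s t : ℕ → G, GoodI u s → GoodI u t →
      (∑ᶠ i, (s i ⊔ t i)) = (∑ᶠ i, s i) ⊔ ∑ᶠ i, t i) ∧
    (∀ s t : ℕ → G, GoodI u s → GoodI u t →
      (∑ᶠ i, s i) = (∑ᶠ i, t i) → s = t) ∧
    (∀ g : G, 0 ≤ g → ∃ s : ℕ → G, GoodI u s ∧ (∑ᶠ i, s i) = g) :=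
  ⟨fun _ hs => hs.finsum_nonneg, finsum_zero, fun _ _ hs ht => hs.add ht hu,
    fun _ _ hs ht => hs.finsum_addGoodI ht hu, fun _ _ hs ht => hs.finsum_inf ht hu,
    fun _ _ hs ht => hs.finsum_sup ht hu, fun _ _ hs ht => hs.eq_of_finsum_eq ht hu,
    fun g hg => (hstrong g).elim fun _ hN =>
      ⟨canonicalSeq u g, canonicalSeq_good hu hN, finsum_canonicalSeq hu hg hN⟩⟩
end
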